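/- arXiv:1006.4683 — 5 statements merged into one kernel-verified Lean document; each statement's English description precedes it below -/
import Mathlib

section
/- Let Γ be a Bieberbach-type subgroup of the affine group of ℝⁿ with parameters (n, q), and assume additionally that u_γ ∈ (1/q)ℤⁿ for every γ ∈ Γ. Let s > 1 be an integer with s ≡ 1 (mod q), and let φ: Γ → Γ be a group homomorphism such that g_{φ(γ)} = g_γ for all γ ∈ Γ and φ sends the translation by m to the translation by s·m for every m ∈ ℤⁿ. Let A ∈ GLₙ(ℤ) with every entry of A − Id divisible by q, let x₀ ∈ ℝⁿ, and suppose the affine map L(x) = A x + x₀ normalizes Γ (i.e., L ∘ γ ∘ L⁻¹ ∈ Γ for all γ ∈ Γ) with g_{L∘γ∘L⁻¹} = g_γ for all γ ∈ Γ. Then there exist vectors v, w ∈ (1/q)ℤⁿ such that the affine maps E(x) := s·x + v and 𝔸(x) := A x + w satisfy E ∘ γ ∘ E⁻¹ = φ(γ) and 𝔸 ∘ γ ∘ 𝔸⁻¹ = L ∘ γ ∘ L⁻¹ for every γ ∈ Γ. -/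
open Matrix

noncomputable section

abbrev Aff (n : ℕ) := (Fin n → ℝ) ≃ᵃ[ℝ] (Fin n → ℝ)

/-- `ℤⁿ` as a subset of `ℝⁿ`. -/
def intVec (n : ℕ) : Set (Fin n → ℝ) := {v | ∀ i, ∃ m : ℤ, v i = m}

/-- `(1/q)ℤⁿ` as a subset of `ℝⁿ`. -/
def qIntVec (n q : ℕ) : Set (Fin n → ℝ) := {v | ∀ i, ∃ m : ℤ, (q : ℝ) * v i = m}

/-- The translation part `u_γ` of an affine bijection. -/
def uPart {n : ℕ} (γ : Aff n) : Fin n → ℝ := γ 0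

/-- The linear part `g_γ` of an affine bijection. -/
def gPart {n : ℕ} (γ : Aff n) : (Fin n → ℝ) →ₗ[ℝ] (Fin n → ℝ) := γ.linear

/-- A linear map lies in `GLₙ(ℤ)` if it is given by an integer matrix invertible over `ℤ`. -/
def IsIntegralGL {n : ℕ} (f : (Fin n → ℝ) →ₗ[ℝ] (Fin n → ℝ)) : Prop :=
  ∃ M : Matrix (Fin n) (Fin n) ℤ, IsUnit M ∧ ∀ x, f x = (M.map (Int.cast : ℤ → ℝ)) *ᵥ x

/-- The subgroup of translations by integer vectors. -/
def intTranslations (n : ℕ) : Subgroup (Aff n) where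
  carrier := {γ | ∃ m ∈ intVec n, ∀ x, γ x = x + m}
  one_mem' := ⟨0, fun i => ⟨0, by simp⟩, fun x => by simp [AffineEquiv.one_def]⟩
  mul_mem' := by
    rintro a b ⟨ma, hma, ha⟩ ⟨mb, hmb, hb⟩
    refine ⟨mb + ma, fun i => ?_, fun x => ?_⟩
    · obtain ⟨p, hp⟩ := hma i; obtain ⟨r, hr⟩ := hmb i
      exact ⟨r + p, by simp [Pi.add_apply, hp, hr]⟩
    · simp [AffineEquiv.coe_mul, Function.comp, hb, ha, add_assoc]
  inv_mem' := by
    rintro a ⟨m, hm, ha⟩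
    refine ⟨-m, fun i => ?_, fun x => ?_⟩
    · obtain ⟨p, hp⟩ := hm i; exact ⟨-p, by simp [hp]⟩
    · have : a (x + -m) = x := by rw [ha]; abel
      calc a⁻¹ x = a⁻¹ (a (x + -m)) := by rw [this]
      _ = x + -m := by rw [AffineEquiv.inv_def, AffineEquiv.symm_apply_apply]

/-- A Bieberbach-type subgroup of the affine group of `ℝⁿ` with parameters `(n, q)`. -/
structure IsBieberbach {n : ℕ} (Γ : Subgroup (Aff n)) (q : ℕ) : Prop where
  /-- every element has linear part in `GLₙ(ℤ)` -/
  integral : ∀ γ ∈ Γ, IsIntegralGL (gPart γ)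
  /-- elements with identity linear part are integer translations -/
  trans_of_linear_id : ∀ γ ∈ Γ, γ.linear = LinearEquiv.refl ℝ (Fin n → ℝ) → γ ∈ intTranslations n
  /-- all integer translations belong to `Γ` -/
  trans_le : intTranslations n ≤ Γ
  /-- the integer translations have index `q` in `Γ` -/
  index_eq : ((intTranslations n).subgroupOf Γ).index = q

/-! For a homomorphism `ψ` of `Γ` into the affine group preserving linear parts and a linear map
`T` commuting with them, the defect `Ψ γ = u_{ψ γ} - T u_γ` is a `1`-cocycle for the action of `Γ`
through linear parts. When `ψ` acts on integer translations through `T` it vanishes on `ℤⁿ`, so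
it factors through the holonomy group of order `q`, and averaging over the holonomy gives
`q • Ψ γ = S - g_γ S`. Since `u_γ ∈ (1/q)ℤⁿ` and `T ≡ 1 mod q`, `Ψ` takes values in `ℤⁿ`, hence so
does `S`, and `v = S / q ∈ (1/q)ℤⁿ` makes `x ↦ T x + v` conjugate `γ` to `ψ γ`. Both the expanding
map (`T = s • 1`, `ψ = φ`) and the Anosov map (`T = A`, `ψ` = conjugation by `L`) are instances. -/

theorem Subgroup.exists_mem_index_smul_eq_sub_of_cocycle {G M : Type*} [Group G]
    [AddCommGroup M] (H : Subgroup G) [H.FiniteIndex] (ρ : G → M →+ M) (Ψ : G → M)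
    (hΨ : ∀ g h, Ψ (g * h) = Ψ g + ρ g (Ψ h)) (hΨH : ∀ h ∈ H, Ψ h = 0)
    (N : AddSubmonoid M) (hΨN : ∀ g, Ψ g ∈ N) :
    ∃ S ∈ N, ∀ g, H.index • Ψ g = S - ρ g S := by
  classical
  have : Fintype (G ⧸ H) := Fintype.ofFinite _
  have hconst : ∀ a b, QuotientGroup.leftRel H a b → Ψ a = Ψ b := by
    intro a b hab
    rw [QuotientGroup.leftRel_apply] at hab
    rw [← mul_inv_cancel_left a b, hΨ, hΨH _ hab, map_zero, add_zero]
  let Ψ' : G ⧸ H → M := Quotient.lift Ψ hconst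
  have hΨ' : ∀ g c, Ψ' (g • c) = Ψ g + ρ g (Ψ' c) := fun g c =>
    QuotientGroup.induction_on c fun h => hΨ g h
  refine ⟨∑ c, Ψ' c, sum_mem fun c _ => QuotientGroup.induction_on c hΨN, fun g => ?_⟩
  have hsum : ∑ c, Ψ' c = H.index • Ψ g + ρ g (∑ c, Ψ' c) := calc
    ∑ c, Ψ' c = ∑ c, Ψ' (g • c) := (Equiv.sum_comp (MulAction.toPerm g) Ψ').symm
    _ = _ := by
      simp only [hΨ', Finset.sum_add_distrib, Finset.sum_const, Finset.card_univ, map_sum,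
        Subgroup.index, Nat.card_eq_fintype_card]
  exact eq_sub_of_add_eq hsum.symm

variable {n q : ℕ}

theorem gPart_add_uPart (a : Aff n) (x : Fin n → ℝ) : gPart a x + uPart a = a x := by
  have h : gPart a x = a x - a 0 := by simpa [gPart] using a.toAffineMap.linearMap_vsub x 0
  rw [h, uPart, sub_add_cancel]

theorem gPart_mul (a b : Aff n) : gPart (a * b) = gPart a ∘ₗ gPart b := rfl

theorem uPart_mul (a b : Aff n) : uPart (a * b) = gPart a (uPart b) + uPart a :=
  (gPart_add_uPart a (b 0)).symm

theorem gPart_eq_of_forall_apply_eq {a : Aff n} {T : (Fin n → ℝ) →ₗ[ℝ] (Fin n → ℝ)}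
    {c : Fin n → ℝ} (h : ∀ x, a x = T x + c) : gPart a = T := by
  refine LinearMap.ext fun x => ?_
  have := gPart_add_uPart a x
  rw [uPart, h, h, map_zero, zero_add] at this
  exact add_right_cancel this

theorem uPart_eq_of_forall_apply_eq_add {γ : Aff n} {m : Fin n → ℝ} (h : ∀ x, γ x = x + m) :
    uPart γ = m := by
  rw [uPart, h, zero_add]

theorem uPart_conj_of_forall_apply_eq_add (a : Aff n) {γ : Aff n} {m : Fin n → ℝ}
    (h : ∀ x, γ x = x + m) : uPart (a * γ * a⁻¹) = gPart a m := by
  have hinv : a (a⁻¹ 0) = 0 := a.apply_symm_apply 0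
  show a (γ (a⁻¹ 0)) = _
  rw [h, ← gPart_add_uPart, map_add, add_right_comm, gPart_add_uPart, hinv, zero_add]

theorem gPart_conj_apply_gPart (a γ : Aff n) (x : Fin n → ℝ) :
    gPart (a * γ * a⁻¹) (gPart a x) = gPart a (gPart γ x) := by
  simp only [gPart_mul, LinearMap.comp_apply]
  congr 2
  exact a.linear.symm_apply_apply x

theorem apply_add_eq_of_uPart_sub_eq {a b : Aff n} {T : (Fin n → ℝ) →ₗ[ℝ] (Fin n → ℝ)}
    (hg : gPart a = gPart b) (hT : ∀ x, T (gPart b x) = gPart b (T x)) {v : Fin n → ℝ}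
    (hu : uPart a - T (uPart b) = v - gPart b v) (x : Fin n → ℝ) :
    a (T x + v) = T (b x) + v := by
  rw [← gPart_add_uPart a, ← gPart_add_uPart b, hg, map_add, map_add, hT,
    sub_eq_iff_eq_add.mp hu]
  abel

def intLattice (n : ℕ) : AddSubgroup (Fin n → ℝ) where
  carrier := intVec n
  zero_mem' i := ⟨0, by simp⟩
  add_mem' {a b} ha hb i := by
    obtain ⟨k, hk⟩ := ha i
    obtain ⟨l, hl⟩ := hb i
    exact ⟨k + l, by simp [hk, hl]⟩
  neg_mem' {a} ha i := by
    obtain ⟨k, hk⟩ := ha i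
    exact ⟨-k, by simp [hk]⟩

theorem smul_mem_qIntVec_of_mem_intVec (hq : 0 < q) {v : Fin n → ℝ} (hv : v ∈ intVec n) :
    (q : ℝ)⁻¹ • v ∈ qIntVec n q := fun i => by
  obtain ⟨m, hm⟩ := hv i
  refine ⟨m, ?_⟩
  rw [Pi.smul_apply, smul_eq_mul, mul_inv_cancel_left₀ (by positivity), hm]

theorem intCast_smul_sub_self_mem_intVec {s : ℤ} (hs : s ≡ 1 [ZMOD q]) {u : Fin n → ℝ}
    (hu : u ∈ qIntVec n q) : (s : ℝ) • u - u ∈ intVec n := fun i => by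
  obtain ⟨k, hk⟩ := hs.symm.dvd
  obtain ⟨m, hm⟩ := hu i
  refine ⟨k * m, ?_⟩
  have hsk : (s : ℝ) = q * k + 1 := by exact_mod_cast (by omega : s = q * k + 1)
  simp only [Pi.sub_apply, Pi.smul_apply, smul_eq_mul, hsk, Int.cast_mul, ← hm]
  ring

theorem map_intCast_mulVec_sub_self_mem_intVec {A : Matrix (Fin n) (Fin n) ℤ}
    (hA : ∀ i j, (q : ℤ) ∣ (A - 1) i j) {u : Fin n → ℝ} (hu : u ∈ qIntVec n q) :
    A.map (Int.cast : ℤ → ℝ) *ᵥ u - u ∈ intVec n := fun i => by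
  choose c hc using hA
  choose m hm using hu
  refine ⟨∑ j, c i j * m j, ?_⟩
  have hentry : ∀ j, (A.map (Int.cast : ℤ → ℝ) - 1) i j = q * c i j := fun j => by
    have := congrArg (Int.cast : ℤ → ℝ) (hc i j)
    simpa [Matrix.sub_apply, Matrix.one_apply, apply_ite] using this
  rw [show A.map (Int.cast : ℤ → ℝ) *ᵥ u - u = (A.map (Int.cast : ℤ → ℝ) - 1) *ᵥ u by
    rw [Matrix.sub_mulVec, Matrix.one_mulVec]]
  simp only [Matrix.mulVec, dotProduct, hentry, Int.cast_sum, Int.cast_mul, ← hm]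
  exact Finset.sum_congr rfl fun j _ => by ring

theorem IsBieberbach.uPart_sub_uPart_mem_intVec {Γ : Subgroup (Aff n)} (hΓ : IsBieberbach Γ q)
    {γ δ : Aff n} (hγ : γ ∈ Γ) (hδ : δ ∈ Γ) (hg : gPart δ = gPart γ) :
    uPart δ - uPart γ ∈ intVec n := by
  have hlin : (δ * γ⁻¹).linear = LinearEquiv.refl ℝ (Fin n → ℝ) := by
    have : δ.linear = γ.linear := LinearEquiv.ext (LinearMap.congr_fun hg)
    show δ.linear * γ.linear⁻¹ = 1
    rw [this, mul_inv_cancel]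
  obtain ⟨m, hm, hτ⟩ := hΓ.trans_of_linear_id _ (mul_mem hδ (inv_mem hγ)) hlin
  have hδ' : δ = δ * γ⁻¹ * γ := (inv_mul_cancel_right δ γ).symm
  rwa [hδ', uPart_mul, gPart_eq_of_forall_apply_eq (T := LinearMap.id) hτ,
    uPart_eq_of_forall_apply_eq_add hτ, LinearMap.id_apply, add_sub_cancel_left]

theorem IsBieberbach.exists_qIntVec_semiconj {Γ : Subgroup (Aff n)} (hq : 0 < q)
    (hΓ : IsBieberbach Γ q) (hu : ∀ γ ∈ Γ, uPart γ ∈ qIntVec n q)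
    (ψ : Γ →* Aff n) (hψΓ : ∀ γ, ψ γ ∈ Γ) (hψg : ∀ γ, gPart (ψ γ) = gPart (γ : Aff n))
    (T : (Fin n → ℝ) →ₗ[ℝ] (Fin n → ℝ)) (hTq : ∀ u ∈ qIntVec n q, T u - u ∈ intVec n)
    (hTg : ∀ (γ : Γ) x, T (gPart (γ : Aff n) x) = gPart (γ : Aff n) (T x))
    (hψtr : ∀ γ : Γ, (γ : Aff n) ∈ intTranslations n → uPart (ψ γ) = T (uPart (γ : Aff n))) :
    ∃ v ∈ qIntVec n q, ∀ (γ : Γ) x, ψ γ (T x + v) = T ((γ : Aff n) x) + v := by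
  set Ψ : Γ → Fin n → ℝ := fun γ => uPart (ψ γ) - T (uPart (γ : Aff n))
  have hcocycle : ∀ γ δ, Ψ (γ * δ) = Ψ γ + (gPart (γ : Aff n)).toAddMonoidHom (Ψ δ) := by
    intro γ δ
    simp only [Ψ, map_mul, Subgroup.coe_mul, uPart_mul, hψg, map_add, map_sub, hTg,
      LinearMap.toAddMonoidHom_coe]
    abel
  have hint : ∀ γ, Ψ γ ∈ intLattice n := fun γ => by
    have := (intLattice n).sub_mem (hΓ.uPart_sub_uPart_mem_intVec γ.2 (hψΓ γ) (hψg γ))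
      (hTq _ (hu γ γ.2))
    convert this using 1
    simp only [Ψ]
    abel
  have : ((intTranslations n).subgroupOf Γ).FiniteIndex := ⟨by rw [hΓ.index_eq]; exact hq.ne'⟩
  obtain ⟨S, hS, hΨS⟩ := Subgroup.exists_mem_index_smul_eq_sub_of_cocycle
    ((intTranslations n).subgroupOf Γ) _ Ψ hcocycle (fun γ hγ => sub_eq_zero.2 (hψtr γ hγ))
    (intLattice n).toAddSubmonoid hint
  refine ⟨(q : ℝ)⁻¹ • S, smul_mem_qIntVec_of_mem_intVec hq hS, fun γ x => ?_⟩
  refine apply_add_eq_of_uPart_sub_eq (hψg γ) (hTg γ) ?_ x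
  have hqR : (q : ℝ) ≠ 0 := by positivity
  have hΨγ : q • Ψ γ = S - gPart (γ : Aff n) S := by simpa [hΓ.index_eq] using hΨS γ
  change Ψ γ = _
  rw [map_smul, ← smul_sub, ← hΨγ, ← Nat.cast_smul_eq_nsmul ℝ, inv_smul_smul₀ hqR]

theorem exists_conformal_expanding_and_affine_Anosov_general
    {n q : ℕ} (hq : 0 < q) (Γ : Subgroup (Aff n)) (hΓ : IsBieberbach Γ q)
    (hu : ∀ γ ∈ Γ, uPart γ ∈ qIntVec n q)
    (s : ℤ) (hs1 : s ≡ 1 [ZMOD (q : ℤ)])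
    (φ : Γ →* Γ)
    (hφg : ∀ γ : Γ, gPart (φ γ : Aff n) = gPart (γ : Aff n))
    (hφt : ∀ (γ : Γ) (m : Fin n → ℝ), m ∈ intVec n → (∀ x, (γ : Aff n) x = x + m) →
        ∀ x, (φ γ : Aff n) x = x + (s : ℝ) • m)
    (A : Matrix (Fin n) (Fin n) ℤ)
    (hAq : ∀ i j, (q : ℤ) ∣ (A - 1) i j)
    (x₀ : Fin n → ℝ) (L : Aff n)
    (hL : ∀ x, L x = (A.map (Int.cast : ℤ → ℝ)) *ᵥ x + x₀)
    (hLmem : ∀ γ : Γ, (L * (γ : Aff n) * L⁻¹) ∈ Γ)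
    (hLg : ∀ γ : Γ, gPart (L * (γ : Aff n) * L⁻¹) = gPart (γ : Aff n)) :
    ∃ v ∈ qIntVec n q, ∃ w ∈ qIntVec n q,
      (∀ (γ : Γ) (x : Fin n → ℝ),
        (φ γ : Aff n) ((s : ℝ) • x + v) = (s : ℝ) • (γ : Aff n) x + v) ∧
      (∀ (γ : Γ) (x : Fin n → ℝ),
        (L * (γ : Aff n) * L⁻¹) ((A.map (Int.cast : ℤ → ℝ)) *ᵥ x + w)
          = (A.map (Int.cast : ℤ → ℝ)) *ᵥ ((γ : Aff n) x) + w) := by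
  obtain ⟨v, hv, hE⟩ := hΓ.exists_qIntVec_semiconj hq hu (Γ.subtype.comp φ) (fun γ => (φ γ).2)
    hφg ((s : ℝ) • LinearMap.id) (fun u => intCast_smul_sub_self_mem_intVec hs1)
    (fun _ _ => by simp) (fun γ ⟨m, hm, hγ⟩ => by
      simp [uPart_eq_of_forall_apply_eq_add hγ, uPart_eq_of_forall_apply_eq_add (hφt γ m hm hγ)])
  have hgL : gPart L = (A.map (Int.cast : ℤ → ℝ)).mulVecLin := gPart_eq_of_forall_apply_eq hL
  obtain ⟨w, hw, h𝔸⟩ := hΓ.exists_qIntVec_semiconj hq hu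
    ((MulAut.conj L).toMonoidHom.comp Γ.subtype) hLmem hLg (A.map (Int.cast : ℤ → ℝ)).mulVecLin
    (fun u => map_intCast_mulVec_sub_self_mem_intVec hAq)
    (fun γ x => by rw [← hgL, ← gPart_conj_apply_gPart, hLg])
    (fun γ ⟨m, _, hγ⟩ => by
      simp [uPart_conj_of_forall_apply_eq_add L hγ, uPart_eq_of_forall_apply_eq_add hγ, hgL])
  exact ⟨v, hv, w, hw, fun γ x => by simpa using hE γ x, h𝔸⟩

/-- **Core of Proposition 3** (Farrell–Gogolev): let `Γ` be a Bieberbach-type subgroup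
of the affine group of `ℝⁿ` with parameters `(n, q)`, with all translation parts in
`(1/q)ℤⁿ`. Let `s > 1` be an integer with `s ≡ 1 (mod q)`, and `φ : Γ → Γ` a
homomorphism fixing linear parts and sending the translation by `m ∈ ℤⁿ` to the
translation by `s·m`. Let `A ∈ GLₙ(ℤ)` with all entries of `A − Id` divisible by `q`,
`x₀ ∈ ℝⁿ`, and suppose `L(x) = A x + x₀` normalizes `Γ` with `g_{L∘γ∘L⁻¹} = g_γ`.
Then there are `v, w ∈ (1/q)ℤⁿ` such that `E(x) := s•x + v` and `𝔸(x) := A x + w`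
satisfy `E ∘ γ ∘ E⁻¹ = φ(γ)` and `𝔸 ∘ γ ∘ 𝔸⁻¹ = L ∘ γ ∘ L⁻¹` for all `γ ∈ Γ`
(stated equivalently as `φ(γ) ∘ E = E ∘ γ` and `(L∘γ∘L⁻¹) ∘ 𝔸 = 𝔸 ∘ γ`). -/
theorem exists_conformal_expanding_and_affine_Anosov
    {n q : ℕ} (hq : 0 < q) (Γ : Subgroup (Aff n)) (hΓ : IsBieberbach Γ q)
    (hu : ∀ γ ∈ Γ, uPart γ ∈ qIntVec n q)
    (s : ℤ) (hs : 1 < s) (hs1 : s ≡ 1 [ZMOD (q : ℤ)])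
    (φ : Γ →* Γ)
    (hφg : ∀ γ : Γ, gPart (φ γ : Aff n) = gPart (γ : Aff n))
    (hφt : ∀ (γ : Γ) (m : Fin n → ℝ), m ∈ intVec n → (∀ x, (γ : Aff n) x = x + m) →
        ∀ x, (φ γ : Aff n) x = x + (s : ℝ) • m)
    (A : Matrix (Fin n) (Fin n) ℤ) (hA : IsUnit A)
    (hAq : ∀ i j, (q : ℤ) ∣ (A - 1) i j)
    (x₀ : Fin n → ℝ) (L : Aff n)
    (hL : ∀ x, L x = (A.map (Int.cast : ℤ → ℝ)) *ᵥ x + x₀)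
    (hLmem : ∀ γ : Γ, (L * (γ : Aff n) * L⁻¹) ∈ Γ)
    (hLg : ∀ γ : Γ, gPart (L * (γ : Aff n) * L⁻¹) = gPart (γ : Aff n)) :
    ∃ v ∈ qIntVec n q, ∃ w ∈ qIntVec n q,
      (∀ (γ : Γ) (x : Fin n → ℝ),
        (φ γ : Aff n) ((s : ℝ) • x + v) = (s : ℝ) • (γ : Aff n) x + v) ∧
      (∀ (γ : Γ) (x : Fin n → ℝ),
        (L * (γ : Aff n) * L⁻¹) ((A.map (Int.cast : ℤ → ℝ)) *ᵥ x + w)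
          = (A.map (Int.cast : ℤ → ℝ)) *ᵥ ((γ : Aff n) x) + w) :=
  exists_conformal_expanding_and_affine_Anosov_general hq Γ hΓ hu s hs1 φ hφg hφt A hAq x₀ L hL
    hLmem hLg
end
end

section
/- Let Γ be a Bieberbach-type subgroup of the affine group of ℝⁿ with parameters (n, q), with u_γ ∈ (1/q)ℤⁿ for every γ ∈ Γ. Let s be a nonzero integer with s ≡ 1 (mod q), and let φ: Γ → Γ be a group homomorphism such that g_{φ(γ)} = g_γ for all γ ∈ Γ and φ sends the translation by m to the translation by s·m for every m ∈ ℤⁿ. Suppose v ∈ ℝⁿ satisfies s•u_γ − u_{φ(γ)} = g_γ(v) − v for every γ ∈ Γ. Define the affine bijection E(x) = s•x + v. Then E ∘ γ ∘ E⁻¹ = φ(γ) for every γ ∈ Γ. -/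
open Matrix

noncomputable section

/-- **Claim 2** (Farrell–Gogolev, proof of Proposition 3): if `Γ` is a Bieberbach-type
subgroup with parameters `(n, q)` whose translation parts lie in `(1/q)ℤⁿ`, `s ≡ 1 (mod q)`
is a nonzero integer, `φ : Γ → Γ` is a homomorphism fixing linear parts and sending the
translation by `m ∈ ℤⁿ` to the translation by `s·m`, and `v` satisfies
`s•u_γ − u_{φ(γ)} = g_γ v − v` for all `γ ∈ Γ`, then conjugation by the affine bijection
`E(x) = s•x + v` restricted to `Γ` is `φ`, i.e. `E ∘ γ ∘ E⁻¹ = φ(γ)` (equivalently,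
`φ(γ) ∘ E = E ∘ γ`) for every `γ ∈ Γ`. -/
theorem claim2 {n q : ℕ} (hq : 0 < q) (Γ : Subgroup (Aff n)) (hΓ : IsBieberbach Γ q)
    (hu : ∀ γ ∈ Γ, uPart γ ∈ qIntVec n q)
    (s : ℤ) (hs : s ≠ 0) (hs1 : s ≡ 1 [ZMOD (q : ℤ)])
    (φ : Γ →* Γ)
    (hφg : ∀ γ : Γ, gPart (φ γ : Aff n) = gPart (γ : Aff n))
    (hφt : ∀ (γ : Γ) (m : Fin n → ℝ), m ∈ intVec n → (∀ x, (γ : Aff n) x = x + m) →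
        ∀ x, (φ γ : Aff n) x = x + (s : ℝ) • m)
    (v : Fin n → ℝ)
    (hv : ∀ γ : Γ, (s : ℝ) • uPart (γ : Aff n) - uPart (φ γ : Aff n)
        = gPart (γ : Aff n) v - v) :
    ∀ (γ : Γ) (x : Fin n → ℝ),
      (φ γ : Aff n) ((s : ℝ) • x + v) = (s : ℝ) • (γ : Aff n) x + v := by
  intro γ x
  have key : ∀ δ : Aff n, ∀ y : Fin n → ℝ, δ y = gPart δ y + uPart δ := by
    intro δ y
    have h := δ.map_vadd (0 : Fin n → ℝ) y
    simpa [gPart, uPart, vadd_eq_add, add_comm] using h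
  have hlin := hφg γ
  have hv' := hv γ
  rw [key (φ γ : Aff n), key (γ : Aff n), hlin]
  have hmap : gPart (γ : Aff n) ((s : ℝ) • x + v)
      = (s : ℝ) • gPart (γ : Aff n) x + gPart (γ : Aff n) v := by
    simp [map_add, _root_.map_smul]
  rw [hmap, smul_add]
  have : uPart (φ γ : Aff n) = (s : ℝ) • uPart (γ : Aff n) - gPart (γ : Aff n) v + v := by
    have := hv γ
    linear_combination (norm := abel) -this
  rw [this]
  abel
end
end

section
/- Let Γ be a Bieberbach-type subgroup of the affine group of ℝⁿ with parameters (n, q), with u_γ ∈ (1/q)ℤⁿ for every γ ∈ Γ. Let A ∈ GLₙ(ℤ) and x₀ ∈ ℝⁿ be such that the affine map L(x) = A x + x₀ satisfies ψ(γ) := L ∘ γ ∘ L⁻¹ ∈ Γ for every γ ∈ Γ, and assume g_{ψ(γ)} = g_γ for all γ ∈ Γ. Suppose w ∈ ℝⁿ satisfies A u_γ − u_{ψ(γ)} = g_γ(w) − w for every γ ∈ Γ. Define the affine bijection 𝔸(x) = A x + w. Then 𝔸 ∘ γ ∘ 𝔸⁻¹ = ψ(γ) = L ∘ γ ∘ L⁻¹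 for every γ ∈ Γ. -/
open Matrix

noncomputable section

/-! Conjugating `γ` by `L` does not change its linear part, so `g_γ` commutes with the linear part
`A` of `L`. Writing both sides of `ψ(γ)(A x + w) = A(γ x) + w` as linear part plus value at `0`,
the terms linear in `x` then agree, and the constant terms agree by the condition on `w`. -/

namespace AffineMap

variable {k V₁ V₂ : Type*} [Ring k] [AddCommGroup V₁] [Module k V₁] [AddCommGroup V₂]
  [Module k V₂]

theorem linear_eq_of_forall_apply_eq_add {f : V₁ →ᵃ[k] V₂} {T : V₁ →ₗ[k] V₂} {c : V₂}
    (h : ∀ x, f x = T x + c) : f.linear = T := by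
  ext v
  rw [congrFun f.decomp' v, Pi.sub_apply, h, h, map_zero, zero_add, add_sub_cancel_right]

theorem apply_linear_add_eq_of_cocycle {ψ g : V₁ →ᵃ[k] V₁} {T : V₁ →ₗ[k] V₁} {w : V₁}
    (hlin : ψ.linear = g.linear) (hcomm : ∀ v, g.linear (T v) = T (g.linear v))
    (hw : T (g 0) - ψ 0 = g.linear w - w) (x : V₁) :
    ψ (T x + w) = T (g x) + w := by
  have hψw : g.linear w + ψ 0 = T (g 0) + w := by
    rw [← sub_eq_sub_iff_add_eq_add, hw]
  rw [congrFun ψ.decomp, congrFun g.decomp]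
  simp only [Pi.add_apply, hlin, map_add, hcomm, add_assoc, hψw]

end AffineMap

theorem AffineEquiv.linear_comm_of_linear_conj_eq {k V : Type*} [Ring k] [AddCommGroup V]
    [Module k V] {L g : V ≃ᵃ[k] V} (h : (L * g * L⁻¹).linear = g.linear) (v : V) :
    g.linear (L.linear v) = L.linear (g.linear v) := by
  have hconj : linearHom L * linearHom g * (linearHom L)⁻¹ = linearHom g := by
    rw [← map_inv, ← map_mul, ← map_mul]; exact h
  rw [mul_inv_eq_iff_eq_mul] at hconj
  exact (congrArg (· v) hconj).symm

theorem claim3_general {n : ℕ} (Γ : Subgroup (Aff n))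
    (A : Matrix (Fin n) (Fin n) ℤ)
    (x₀ : Fin n → ℝ) (L : Aff n)
    (hL : ∀ x, L x = (A.map (Int.cast : ℤ → ℝ)) *ᵥ x + x₀)
    (hψg : ∀ γ : Γ, gPart (L * (γ : Aff n) * L⁻¹) = gPart (γ : Aff n))
    (w : Fin n → ℝ)
    (hw : ∀ γ : Γ, (A.map (Int.cast : ℤ → ℝ)) *ᵥ uPart (γ : Aff n)
        - uPart (L * (γ : Aff n) * L⁻¹) = gPart (γ : Aff n) w - w) :
    ∀ (γ : Γ) (x : Fin n → ℝ),
      (L * (γ : Aff n) * L⁻¹) ((A.map (Int.cast : ℤ → ℝ)) *ᵥ x + w)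
        = (A.map (Int.cast : ℤ → ℝ)) *ᵥ ((γ : Aff n) x) + w := by
  intro γ x
  have hLlin : ∀ v, L.linear v = A.map (Int.cast : ℤ → ℝ) *ᵥ v := fun v =>
    LinearMap.congr_fun (AffineMap.linear_eq_of_forall_apply_eq_add
      (f := L.toAffineMap) (T := (A.map (Int.cast : ℤ → ℝ)).mulVecLin) hL) v
  have hlin : (L * γ * L⁻¹).linear = (γ : Aff n).linear :=
    LinearEquiv.toLinearMap_inj.mp (hψg γ)
  simp only [← hLlin]
  exact AffineMap.apply_linear_add_eq_of_cocycle (ψ := (L * γ * L⁻¹).toAffineMap)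
    (g := (γ : Aff n).toAffineMap) (T := L.linear.toLinearMap)
    (by simp [hlin]) (L.linear_comm_of_linear_conj_eq hlin)
    (by simpa [hLlin, uPart, gPart] using hw γ) x

/-- **Claim 3** (Farrell–Gogolev, proof of Proposition 3): let `Γ` be a Bieberbach-type
subgroup with parameters `(n, q)` whose translation parts lie in `(1/q)ℤⁿ`, let
`A ∈ GLₙ(ℤ)` and `x₀ ∈ ℝⁿ` be such that `L(x) = A x + x₀` normalizes `Γ` with
`ψ(γ) := L ∘ γ ∘ L⁻¹ ∈ Γ` and `g_{ψ(γ)} = g_γ`, and suppose `w` satisfies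
`A u_γ − u_{ψ(γ)} = g_γ w − w` for all `γ ∈ Γ`. Then conjugation by the affine
bijection `𝔸(x) = A x + w` restricted to `Γ` is `ψ`, i.e.
`𝔸 ∘ γ ∘ 𝔸⁻¹ = ψ(γ) = L ∘ γ ∘ L⁻¹` (equivalently `ψ(γ) ∘ 𝔸 = 𝔸 ∘ γ`) for `γ ∈ Γ`. -/
theorem claim3 {n q : ℕ} (hq : 0 < q) (Γ : Subgroup (Aff n)) (hΓ : IsBieberbach Γ q)
    (hu : ∀ γ ∈ Γ, uPart γ ∈ qIntVec n q)
    (A : Matrix (Fin n) (Fin n) ℤ) (hA : IsUnit A)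
    (x₀ : Fin n → ℝ) (L : Aff n)
    (hL : ∀ x, L x = (A.map (Int.cast : ℤ → ℝ)) *ᵥ x + x₀)
    (hψmem : ∀ γ : Γ, (L * (γ : Aff n) * L⁻¹) ∈ Γ)
    (hψg : ∀ γ : Γ, gPart (L * (γ : Aff n) * L⁻¹) = gPart (γ : Aff n))
    (w : Fin n → ℝ)
    (hw : ∀ γ : Γ, (A.map (Int.cast : ℤ → ℝ)) *ᵥ uPart (γ : Aff n)
        - uPart (L * (γ : Aff n) * L⁻¹) = gPart (γ : Aff n) w - w) :
    ∀ (γ : Γ) (x : Fin n → ℝ),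
      (L * (γ : Aff n) * L⁻¹) ((A.map (Int.cast : ℤ → ℝ)) *ᵥ x + w)
        = (A.map (Int.cast : ℤ → ℝ)) *ᵥ ((γ : Aff n) x) + w :=
  claim3_general Γ A x₀ L hL hψg w hw
end
end

section
/- Let Γ be a group of affine bijections of ℝⁿ, where each γ ∈ Γ has the form γ(x) = g_γ x + u_γ. Let B be an invertible n×n real matrix such that Id − B is invertible and B g_γ = g_γ B for every γ ∈ Γ. Let û, ŵ ∈ ℝⁿ and define the affine bijections L(x) = B x + û and 𝔸(x) = B x + ŵ. Assume that L ∘ γ ∘ L⁻¹ = 𝔸 ∘ γ ∘ 𝔸⁻¹ for every γ ∈ Γ. Set a := (Id − B)⁻¹(û − ŵ) and let T be the translation T(x) = x + a. Then T ∘ 𝔸 ∘ T⁻¹ = L and T ∘ γ = γ ∘ T for every γ ∈ Γ. -/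
open Matrix

noncomputable section

/-- **Claim 4** (Farrell–Gogolev, proof of Proposition 3): let `Γ` be a group of affine
bijections of `ℝⁿ`, `B` an invertible matrix with `Id − B` invertible and commuting with
the linear part of every `γ ∈ Γ`, and let `L(x) = B x + û`, `𝔸(x) = B x + ŵ` be affine
bijections with `L ∘ γ ∘ L⁻¹ = 𝔸 ∘ γ ∘ 𝔸⁻¹` for all `γ ∈ Γ`. Then for
`a := (Id − B)⁻¹(û − ŵ)` and the translation `T(x) = x + a` one has
`T ∘ 𝔸 ∘ T⁻¹ = L` and `T ∘ γ = γ ∘ T` for every `γ ∈ Γ`. -/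
theorem claim4 {n : ℕ} (Γ : Subgroup (Aff n))
    (B : Matrix (Fin n) (Fin n) ℝ) (hB : IsUnit B) (hIdB : IsUnit (1 - B))
    (hcomm : ∀ γ ∈ Γ, ∀ x : Fin n → ℝ, B *ᵥ (γ.linear x) = γ.linear (B *ᵥ x))
    (uhat what : Fin n → ℝ) (L 𝔸 : Aff n)
    (hL : ∀ x, L x = B *ᵥ x + uhat) (h𝔸 : ∀ x, 𝔸 x = B *ᵥ x + what)
    (hconj : ∀ γ ∈ Γ, L * γ * L⁻¹ = 𝔸 * γ * 𝔸⁻¹)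
    (a : Fin n → ℝ) (ha : a = (1 - B)⁻¹ *ᵥ (uhat - what)) :
    (∀ x, 𝔸 (x - a) + a = L x) ∧ (∀ γ ∈ Γ, ∀ x, γ x + a = γ (x + a)) := by
  have hBdet : IsUnit B.det := (Matrix.isUnit_iff_isUnit_det B).mp hB
  have hIdBdet : IsUnit (1 - B).det := (Matrix.isUnit_iff_isUnit_det _).mp hIdB
  have hIdBa : (1 - B) *ᵥ a = uhat - what := by
    rw [ha, Matrix.mulVec_mulVec, Matrix.mul_nonsing_inv _ hIdBdet, Matrix.one_mulVec]
  have key1 : ∀ x, 𝔸 (x - a) + a = L x := by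
    intro x
    rw [h𝔸, hL, Matrix.mulVec_sub]
    have h3 : a - B *ᵥ a = uhat - what := by
      rw [← hIdBa, Matrix.sub_mulVec, Matrix.one_mulVec]
    have : B *ᵥ x - B *ᵥ a + what + a = B *ᵥ x + what + (a - B *ᵥ a) := by abel
    rw [this, h3]; abel
  refine ⟨key1, ?_⟩
  intro γ hγ x
  set b := B⁻¹ *ᵥ (uhat - what) with hb
  have hBb : B *ᵥ b = uhat - what := by
    rw [hb, Matrix.mulVec_mulVec, Matrix.mul_nonsing_inv _ hBdet, Matrix.one_mulVec]
  have h𝔸b : ∀ y, 𝔸 (y + b) = L y := by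
    intro y
    rw [h𝔸, hL, Matrix.mulVec_add, hBb]; abel
  have hS : ∀ y, 𝔸⁻¹ (L y) = y + b := by
    intro y
    rw [← h𝔸b y, AffineEquiv.inv_def, AffineEquiv.symm_apply_apply]
  have h4 : (𝔸⁻¹ * L) * γ = γ * (𝔸⁻¹ * L) := by
    have h := congrArg (fun t => 𝔸⁻¹ * t * L) (hconj γ hγ)
    simpa [mul_assoc] using h
  have hfix : ∀ y, γ y + b = γ (y + b) := by
    intro y
    have h := congrArg (fun f : Aff n => f y) h4
    simp only [AffineEquiv.coe_mul, Function.comp_apply] at h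
    rw [hS (γ y), hS y] at h
    exact h
  have hmapadd : ∀ v y : Fin n → ℝ, γ (v + y) = γ.linear v + γ y := by
    intro v y
    exact γ.map_vadd y v
  have hlinb : γ.linear b = b := by
    have h0 := hfix 0
    rw [zero_add, show (γ b : Fin n → ℝ) = γ (b + 0) by rw [add_zero],
      hmapadd b 0] at h0
    exact (add_right_cancel (add_comm (γ 0) b ▸ h0 : b + γ 0 = γ.linear b + γ 0)).symm
  have hlinuw : γ.linear (uhat - what) = uhat - what := by
    rw [← hBb, ← hcomm γ hγ b, hlinb]
  have hlina : γ.linear a = a := by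
    have h1 : (1 - B) *ᵥ (γ.linear a) = (1 - B) *ᵥ a := by
      rw [hIdBa, Matrix.sub_mulVec, Matrix.one_mulVec, hcomm γ hγ a, ← map_sub,
        show (a - B *ᵥ a) = uhat - what by rw [← hIdBa, Matrix.sub_mulVec, Matrix.one_mulVec]]
      exact hlinuw
    have h2 := congrArg (fun v => (1 - B)⁻¹ *ᵥ v) h1
    simpa [Matrix.mulVec_mulVec, Matrix.nonsing_inv_mul _ hIdBdet, Matrix.one_mulVec] using h2
  rw [show x + a = a + x by rw [add_comm], hmapadd a x, hlina, add_comm]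
end
end

section
/- Let Γ be a Bieberbach-type subgroup of the affine group of ℝⁿ with parameters (n, q), with u_γ ∈ (1/q)ℤⁿ for every γ ∈ Γ. Let A ∈ GLₙ(ℤ) with every entry of A − Id divisible by q, and let x₀ ∈ ℝⁿ be such that the affine map L(x) = A x + x₀ satisfies ψ(γ) := L ∘ γ ∘ L⁻¹ ∈ Γ for every γ ∈ Γ; assume g_{ψ(γ)} = g_γ for all γ ∈ Γ. Define ω_γ := A u_γ − u_{ψ(γ)}. Then for all γ, δ ∈ Γ: (i) ω_γ ∈ ℤⁿ; (ii) if g_γ = g_δ then ω_γ = ω_δ; (iii) ω_{γδ} = g_γ(ω_δ) + ω_γ. -/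
open Matrix

noncomputable section

/-- **The crossed homomorphism `ω`** (Farrell–Gogolev, proof of Proposition 3): let `Γ`
be a Bieberbach-type subgroup with parameters `(n, q)` whose translation parts lie in
`(1/q)ℤⁿ`, let `A ∈ GLₙ(ℤ)` with all entries of `A − Id` divisible by `q`, and let
`x₀ ∈ ℝⁿ` be such that `L(x) = A x + x₀` normalizes `Γ`, with `ψ(γ) := L ∘ γ ∘ L⁻¹ ∈ Γ`
and `g_{ψ(γ)} = g_γ`. Define `ω_γ := A u_γ − u_{ψ(γ)}`. Then (i) `ω_γ ∈ ℤⁿ`;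
(ii) `ω_γ` depends only on the linear part `g_γ`; (iii) `ω_{γδ} = g_γ(ω_δ) + ω_γ`. -/
theorem omega_crossedHom {n q : ℕ} (hq : 0 < q) (Γ : Subgroup (Aff n))
    (hΓ : IsBieberbach Γ q)
    (hu : ∀ γ ∈ Γ, uPart γ ∈ qIntVec n q)
    (A : Matrix (Fin n) (Fin n) ℤ) (hA : IsUnit A)
    (hAq : ∀ i j, (q : ℤ) ∣ (A - 1) i j)
    (x₀ : Fin n → ℝ) (L : Aff n)
    (hL : ∀ x, L x = (A.map (Int.cast : ℤ → ℝ)) *ᵥ x + x₀)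
    (hψmem : ∀ γ : Γ, (L * (γ : Aff n) * L⁻¹) ∈ Γ)
    (hψg : ∀ γ : Γ, gPart (L * (γ : Aff n) * L⁻¹) = gPart (γ : Aff n))
    (ω : Γ → Fin n → ℝ)
    (hω : ∀ γ : Γ, ω γ = (A.map (Int.cast : ℤ → ℝ)) *ᵥ uPart (γ : Aff n)
        - uPart (L * (γ : Aff n) * L⁻¹)) :
    (∀ γ : Γ, ω γ ∈ intVec n) ∧
    (∀ γ δ : Γ, gPart (γ : Aff n) = gPart (δ : Aff n) → ω γ = ω δ) ∧
    (∀ γ δ : Γ, ω (γ * δ) = gPart (γ : Aff n) (ω δ) + ω γ) := by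
  classical
  set Abar := A.map (Int.cast : ℤ → ℝ) with hAbar
  -- decomposition of an affine equivalence
  have decomp : ∀ (γ : Aff n) (x : Fin n → ℝ), γ x = γ.linear x + γ 0 := by
    intro γ x
    have h := congrFun (AffineMap.decomp (γ : (Fin n → ℝ) →ᵃ[ℝ] (Fin n → ℝ))) x
    simpa using h
  -- linear part of L
  have hLlin : ∀ x, L.linear x = Abar *ᵥ x := by
    intro x
    have h1 : L.linear x = L x - L 0 := by rw [decomp L x]; abel
    rw [hL x, hL 0] at h1
    simpa [Matrix.mulVec_zero] using h1
  have hinvlinL : ∀ x, (L⁻¹).linear (L.linear x) = x := by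
    intro x
    have : (L⁻¹ * L).linear x = (1 : Aff n).linear x := by rw [inv_mul_cancel]
    exact this
  have hlincancel : ∀ (γ : Aff n) (x : Fin n → ℝ), γ.linear ((γ⁻¹).linear x) = x := by
    intro γ x
    have : (γ * γ⁻¹).linear x = (1 : Aff n).linear x := by rw [mul_inv_cancel]
    exact this
  -- commuting of Abar with linear parts
  have hcomm : ∀ (γ : Γ) (x : Fin n → ℝ),
      (γ : Aff n).linear (Abar *ᵥ x) = Abar *ᵥ ((γ : Aff n).linear x) := by
    intro γ x
    have h := LinearMap.congr_fun (hψg γ) (L.linear x)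
    have h2 : L.linear ((γ : Aff n).linear x) = (γ : Aff n).linear (L.linear x) := by
      calc L.linear ((γ : Aff n).linear x)
          = L.linear ((γ : Aff n).linear ((L⁻¹).linear (L.linear x))) := by
            rw [hinvlinL]
        _ = gPart (L * (γ : Aff n) * L⁻¹) (L.linear x) := rfl
        _ = gPart (γ : Aff n) (L.linear x) := h
        _ = (γ : Aff n).linear (L.linear x) := rfl
    rw [hLlin, hLlin] at h2
    exact h2.symm
  -- the key formula : ω γ = g_γ x₀ - x₀
  have ωkey : ∀ γ : Γ, ω γ = (γ : Aff n).linear x₀ - x₀ := by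
    intro γ
    have hy : Abar *ᵥ ((L⁻¹ : Aff n) 0) = -x₀ := by
      have h0 : L ((L⁻¹ : Aff n) 0) = 0 := by
        have : (L * L⁻¹) (0 : Fin n → ℝ) = (1 : Aff n) 0 := by rw [mul_inv_cancel]
        exact this
      rw [hL] at h0
      exact eq_neg_of_add_eq_zero_left h0
    have hup : uPart (L * (γ : Aff n) * L⁻¹)
        = -((γ : Aff n).linear x₀) + Abar *ᵥ uPart (γ : Aff n) + x₀ := by
      have e1 : uPart (L * (γ : Aff n) * L⁻¹) = L ((γ : Aff n) ((L⁻¹ : Aff n) 0)) := rfl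
      rw [e1, decomp (γ : Aff n), hL, Matrix.mulVec_add, ← hcomm γ _, hy, map_neg]
      rfl
    rw [hω γ, hup]
    abel
  refine ⟨?_, ?_, ?_⟩
  · -- integrality
    intro γ
    -- the element ψ(γ) γ⁻¹ is an integer translation
    have τmem : (L * (γ : Aff n) * L⁻¹) * (γ : Aff n)⁻¹ ∈ Γ :=
      mul_mem (hψmem γ) (inv_mem γ.2)
    have τlin : ((L * (γ : Aff n) * L⁻¹) * (γ : Aff n)⁻¹).linear
        = LinearEquiv.refl ℝ (Fin n → ℝ) := by
      apply LinearEquiv.toLinearMap_injective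
      apply LinearMap.ext
      intro x
      have h := LinearMap.congr_fun (hψg γ) (((γ : Aff n)⁻¹).linear x)
      calc ((L * (γ : Aff n) * L⁻¹) * (γ : Aff n)⁻¹).linear x
          = gPart (L * (γ : Aff n) * L⁻¹) (((γ : Aff n)⁻¹).linear x) := rfl
        _ = gPart (γ : Aff n) (((γ : Aff n)⁻¹).linear x) := h
        _ = (γ : Aff n).linear (((γ : Aff n)⁻¹).linear x) := rfl
        _ = x := hlincancel _ _
    have htr := hΓ.trans_of_linear_id _ τmem τlin
    obtain ⟨m, hm, hτ⟩ := htr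
    have hup : uPart (L * (γ : Aff n) * L⁻¹) = uPart (γ : Aff n) + m := by
      have e : ((L * (γ : Aff n) * L⁻¹) * (γ : Aff n)⁻¹) ((γ : Aff n) 0)
          = (L * (γ : Aff n) * L⁻¹) 0 := by
        show (L * (γ : Aff n) * L⁻¹) ((γ : Aff n)⁻¹ ((γ : Aff n) 0)) = _
        have h0 : (γ : Aff n)⁻¹ ((γ : Aff n) 0) = 0 := by
          rw [AffineEquiv.inv_def]; exact AffineEquiv.symm_apply_apply _ _
        rw [h0]
      have h := hτ ((γ : Aff n) 0)
      rw [e] at h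
      exact h
    have vec : ω γ = ((A - 1).map (Int.cast : ℤ → ℝ)) *ᵥ uPart (γ : Aff n) - m := by
      rw [hω γ, hup]
      have hmap : ((A - 1).map (Int.cast : ℤ → ℝ)) = Abar - 1 := by
        ext i j
        simp [hAbar, Matrix.map_apply, Matrix.sub_apply, Matrix.one_apply, apply_ite
          (Int.cast : ℤ → ℝ)]
      rw [hmap, Matrix.sub_mulVec, Matrix.one_mulVec]
      abel
    intro i
    choose k hk using fun j => hAq i j
    choose mu hmu using hu (γ : Aff n) γ.2
    obtain ⟨mi, hmi⟩ := hm i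
    refine ⟨(∑ j, k j * mu j) - mi, ?_⟩
    have hXi : ω γ i = (∑ j, (((A - 1) i j : ℤ) : ℝ) * uPart (γ : Aff n) j) - m i := by
      rw [congrFun vec i]
      simp [Matrix.mulVec, dotProduct, Matrix.map_apply]
    have hsum : ∀ j, (((A - 1) i j : ℤ) : ℝ) * uPart (γ : Aff n) j
        = ((k j * mu j : ℤ) : ℝ) := by
      intro j
      rw [hk j]
      push_cast
      rw [mul_comm (q : ℝ) ((k j : ℝ)), mul_assoc, hmu j]
    rw [hXi, Finset.sum_congr rfl (fun j _ => hsum j), hmi]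
    push_cast
    ring
  · -- dependence only on the linear part
    intro γ δ h
    rw [ωkey γ, ωkey δ]
    have := LinearMap.congr_fun h x₀
    have h2 : (γ : Aff n).linear x₀ = (δ : Aff n).linear x₀ := this
    rw [h2]
  · -- crossed homomorphism property
    intro γ δ
    rw [ωkey (γ * δ), ωkey γ, ωkey δ]
    have e1 : ((↑(γ * δ) : Aff n)).linear x₀
        = (γ : Aff n).linear ((δ : Aff n).linear x₀) := rfl
    have e2 : gPart (γ : Aff n) ((δ : Aff n).linear x₀ - x₀)
        = (γ : Aff n).linear ((δ : Aff n).linear x₀) - (γ : Aff n).linear x₀ := by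
      rw [show gPart (γ : Aff n) ((δ : Aff n).linear x₀ - x₀)
        = (γ : Aff n).linear ((δ : Aff n).linear x₀ - x₀) from rfl, map_sub]
    rw [e1, e2]
    abel
end
end
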